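/- Fix γ ∈ (0,1). For every β with 0 < β ≤ min{2γ, 2(1−γ)} and β < 1, one has h(β) + f_A(β,γ) ≤ h(2γ(1−γ)) + f_A(2γ(1−γ), γ); that is, the function β ↦ h(β) + f_A(β,γ) on (0, min{2γ,2(1−γ)}] attains its maximum at β = 2γ(1−γ). -/

import Mathlib

/-!
Let `(X, Y)` be a pair of bits, both with `P(· = 1) = γ`, and with `P(X ≠ Y) = β`; its four
cells carry the masses `β/2, β/2, γ - β/2, 1 - γ - β/2`. By the chain rule, `h(β) + f_A(β, γ)`
is the joint entropy `H(X, Y)` minus `h(γ)`. Gibbs' inequality against the product distribution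
`(γ(1-γ), γ(1-γ), γ², (1-γ)²)` bounds `H(X, Y)` by `2 h(γ)`, with equality when `X, Y` are
independent, i.e. when `β = 2γ(1-γ)`.
-/

/-- Binary entropy function (base-2 logs), with the convention `0 * log 0 = 0`. -/
noncomputable def binEnt (x : ℝ) : ℝ :=
  -(x * Real.logb 2 x) - (1 - x) * Real.logb 2 (1 - x)

/-- The spectral shape exponent of the accumulator:
`f_A(α,β) = α − h(β) + (1−α)·h((β−α/2)/(1−α))`. -/
noncomputable def fA (α β : ℝ) : ℝ :=
  α - binEnt β + (1 - α) * binEnt ((β - α / 2) / (1 - α))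

/-- The spectral shape exponent of the discrete derivative:
`f_D(α,β) = (1−α)·h(β/(2(1−α))) + α·h(β/(2α)) − h(α)`. -/
noncomputable def fD (α β : ℝ) : ℝ :=
  (1 - α) * binEnt (β / (2 * (1 - α))) + α * binEnt (β / (2 * α)) - binEnt α

open Real

lemma binEnt_eq_binEntropy_div_log_two (x : ℝ) : binEnt x = binEntropy x / log 2 := by
  simp only [binEnt, binEntropy_eq_negMulLog_add_negMulLog_one_sub, negMulLog, logb]
  ring

lemma negMulLog_add_mul_log_le_sub {p q : ℝ} (hp : 0 ≤ p) (hq : 0 < q) :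
    negMulLog p + p * log q ≤ q - p := by
  have hpq : negMulLog p + p * log q = q * negMulLog (p / q) := by
    have h := negMulLog_mul q (p / q)
    rw [mul_div_cancel₀ p hq.ne'] at h
    rw [h, negMulLog]
    field_simp
    ring
  calc negMulLog p + p * log q = q * negMulLog (p / q) := hpq
    _ ≤ q * (1 - p / q) :=
        mul_le_mul_of_nonneg_left (negMulLog_le_one_sub_self (div_nonneg hp hq.le)) hq.le
    _ = q - p := by field_simp

lemma mul_binEntropy_div_add (a b : ℝ) :
    (a + b) * binEntropy (a / (a + b)) = negMulLog a + negMulLog b - negMulLog (a + b) := by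
  rcases eq_or_ne (a + b) 0 with hab | hab
  · obtain rfl : b = -a := by linarith
    simp [negMulLog]
  · have split (c : ℝ) : negMulLog c = c / (a + b) * negMulLog (a + b) +
        (a + b) * negMulLog (c / (a + b)) := by
      rw [← negMulLog_mul, mul_div_cancel₀ c hab]
    have hb : 1 - a / (a + b) = b / (a + b) := by field_simp; ring
    rw [binEntropy_eq_negMulLog_add_negMulLog_one_sub, hb, split a, split b]
    field_simp
    ring

lemma binEnt_add_fA_mul_log_two (β γ : ℝ) :
    (binEnt β + fA β γ) * log 2 = 2 * negMulLog (β / 2) + negMulLog (γ - β / 2) +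
      negMulLog (1 - γ - β / 2) - binEntropy γ := by
  have hchain := mul_binEntropy_div_add (γ - β / 2) (1 - γ - β / 2)
  rw [show γ - β / 2 + (1 - γ - β / 2) = 1 - β by ring] at hchain
  have hhalf : 2 * negMulLog (β / 2) = negMulLog β + β * log 2 := by
    rw [div_eq_mul_inv, negMulLog_mul]
    simp only [negMulLog, log_inv]
    ring
  simp only [fA, binEnt_eq_binEntropy_div_log_two]
  rw [binEntropy_eq_negMulLog_add_negMulLog_one_sub β]
  generalize binEntropy ((γ - β / 2) / (1 - β)) = B at hchain ⊢
  have hlog : log 2 ≠ 0 := (log_pos one_lt_two).ne'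
  simp only [add_mul, sub_mul, mul_assoc, div_mul_cancel₀ _ hlog]
  linear_combination hchain - hhalf

lemma binEnt_add_fA_le_binEnt {β γ : ℝ} (hβ : 0 ≤ β) (hβγ : β ≤ 2 * γ) (hβγ' : β ≤ 2 * (1 - γ))
    (hγ0 : 0 < γ) (hγ1 : γ < 1) : binEnt β + fA β γ ≤ binEnt γ := by
  have hγ1' : 0 < 1 - γ := sub_pos.mpr hγ1
  have hcross := negMulLog_add_mul_log_le_sub (p := β / 2) (q := γ * (1 - γ))
    (by positivity) (by positivity)
  have hone := negMulLog_add_mul_log_le_sub (p := γ - β / 2) (q := γ * γ)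
    (by linarith) (by positivity)
  have hzero := negMulLog_add_mul_log_le_sub (p := 1 - γ - β / 2) (q := (1 - γ) * (1 - γ))
    (by linarith) (by positivity)
  rw [log_mul hγ0.ne' hγ1'.ne'] at hcross
  rw [log_mul hγ0.ne' hγ0.ne'] at hone
  rw [log_mul hγ1'.ne' hγ1'.ne'] at hzero
  rw [binEnt_eq_binEntropy_div_log_two γ, le_div_iff₀ (log_pos one_lt_two),
    binEnt_add_fA_mul_log_two, binEntropy_eq_negMulLog_add_negMulLog_one_sub]
  have hγ : negMulLog γ = -γ * log γ := rfl
  have hγ' : negMulLog (1 - γ) = -(1 - γ) * log (1 - γ) := rfl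
  linear_combination 2 * hcross + hone + hzero - 2 * hγ - 2 * hγ'

lemma binEnt_add_fA_two_mul_mul_one_sub (γ : ℝ) :
    binEnt (2 * γ * (1 - γ)) + fA (2 * γ * (1 - γ)) γ = binEnt γ := by
  refine mul_right_cancel₀ (log_pos one_lt_two).ne' ?_
  rw [binEnt_add_fA_mul_log_two, binEnt_eq_binEntropy_div_log_two γ,
    div_mul_cancel₀ _ (log_pos one_lt_two).ne', binEntropy_eq_negMulLog_add_negMulLog_one_sub,
    show 2 * γ * (1 - γ) / 2 = γ * (1 - γ) by ring,
    show γ - γ * (1 - γ) = γ * γ by ring,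
    show 1 - γ - γ * (1 - γ) = (1 - γ) * (1 - γ) by ring,
    negMulLog_mul, negMulLog_mul, negMulLog_mul]
  ring

theorem entropy_add_fA_max_general (γ : ℝ) (hγ0 : 0 < γ) (hγ1 : γ < 1)
    (β : ℝ) (hβ0 : 0 < β) (hβu : β ≤ min (2 * γ) (2 * (1 - γ))) :
    binEnt β + fA β γ ≤ binEnt (2 * γ * (1 - γ)) + fA (2 * γ * (1 - γ)) γ := by
  obtain ⟨hβγ, hβγ'⟩ := le_min_iff.mp hβu
  calc binEnt β + fA β γ ≤ binEnt γ := binEnt_add_fA_le_binEnt hβ0.le hβγ hβγ' hγ0 hγ1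
    _ = binEnt (2 * γ * (1 - γ)) + fA (2 * γ * (1 - γ)) γ :=
        (binEnt_add_fA_two_mul_mul_one_sub γ).symm

/-- For fixed `γ ∈ (0,1)`, the function `β ↦ h(β) + f_A(β,γ)` on `(0, min{2γ,2(1−γ)}]`
attains its maximum at `β = 2γ(1−γ)`. -/
theorem entropy_add_fA_max (γ : ℝ) (hγ0 : 0 < γ) (hγ1 : γ < 1)
    (β : ℝ) (hβ0 : 0 < β) (hβu : β ≤ min (2 * γ) (2 * (1 - γ))) (hβ1 : β < 1) :
    binEnt β + fA β γ ≤ binEnt (2 * γ * (1 - γ)) + fA (2 * γ * (1 - γ)) γ :=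
  entropy_add_fA_max_general γ hγ0 hγ1 β hβ0 hβu
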